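/- Let n ≥ 1 and suppose ψ is a maximal differentiable solution of ψ'(x) = (2√(n+1)/(1+x²))·(1+ψ(x)²)·(1 − ((2n−1−x²)/(2√(n+1)·x))·ψ(x)) defined near some x₀ ∈ (√(2n−1), ∞) with ψ(x₀) < 2√(n+1)·x₀/(2n−1−x₀²). Then there exists x₁ ∈ (x₀, ∞) with ψ(x) → −∞ as x ↑ x₁. -/

import Mathlib

/-!
Above `√(2n-1)` the nullcline `η` is increasing and the field is negative below it. Fencing at the
level `ψ x₀ < η x₀ ≤ η x` keeps `ψ` below `η`, so `ψ` strictly decreases on its maximal interval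
`[x₀, b)`. If it stayed bounded it would have a finite limit `L` at `b`, where the field is `C¹`
(as `b > 0`), and gluing on the local solution through `(b, L)` would continue `ψ` past `b`.
-/

open Real Set Filter Topology Function

section LocalExistence

variable {E : Type*} [NormedAddCommGroup E] [NormedSpace ℝ E] [CompleteSpace E]

/-- Reduced to the autonomous field `(t, x) ↦ (1, f t x)`, whose first coordinate is the time. -/
theorem exists_hasDerivAt_of_contDiffAt_uncurry {f : ℝ → E → E} {t₀ : ℝ} {x₀ : E}
    (hf : ContDiffAt ℝ 1 (uncurry f) (t₀, x₀)) :
    ∃ α : ℝ → E, α t₀ = x₀ ∧ ∃ ε > 0, ∀ t ∈ Ioo (t₀ - ε) (t₀ + ε), HasDerivAt α (f t (α t)) t := by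
  have hg : ContDiffAt ℝ 1 (fun p : ℝ × E => ((1 : ℝ), uncurry f p)) (t₀, x₀) :=
    contDiffAt_const.prodMk hf
  obtain ⟨γ, hγ₀, ε, hε, hγ⟩ :=
    hg.exists_forall_mem_closedBall_exists_eq_forall_mem_Ioo_hasDerivAt₀ t₀
  have hfst : ∀ t ∈ Ioo (t₀ - ε) (t₀ + ε), HasDerivAt (fun s => (γ s).1) 1 t := fun t ht =>
    (hasFDerivAt_fst.comp_hasDerivAt t (hγ t ht) :)
  have hsnd : ∀ t ∈ Ioo (t₀ - ε) (t₀ + ε), HasDerivAt (fun s => (γ s).2) (f (γ t).1 (γ t).2) t :=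
    fun t ht => (hasFDerivAt_snd.comp_hasDerivAt t (hγ t ht) :)
  have htime : EqOn (fun s => (γ s).1) id (Ioo (t₀ - ε) (t₀ + ε)) := by
    refine isOpen_Ioo.eqOn_of_deriv_eq isPreconnected_Ioo
      (fun t ht => (hfst t ht).differentiableAt.differentiableWithinAt)
      differentiableOn_id (fun t ht => ?_) (x := t₀) ⟨by linarith, by linarith⟩ (by simp [hγ₀])
    simp [(hfst t ht).deriv]
  refine ⟨fun s => (γ s).2, by simp [hγ₀], ε, hε, fun t ht => ?_⟩
  simpa [htime ht] using hsnd t ht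

/-- The glued function is differentiable at `b` because both one-sided derivatives equal
`f b L`; on the left this is the limit of the derivative. -/
theorem exists_hasDerivAt_extension {f : ℝ → E → E} {ψ : ℝ → E} {a b : ℝ} {L : E}
    (hab : a < b) (hψ : ∀ x ∈ Ico a b, HasDerivAt ψ (f x (ψ x)) x)
    (hL : Tendsto ψ (𝓝[<] b) (𝓝 L)) (hf : ContDiffAt ℝ 1 (uncurry f) (b, L)) :
    ∃ φ : ℝ → E, ∃ b' > b, (∀ x ∈ Ico a b', HasDerivAt φ (f x (φ x)) x) ∧
      EqOn φ ψ (Ico a b) := by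
  classical
  obtain ⟨γ, hγb, ε, hε, hγ⟩ := exists_hasDerivAt_of_contDiffAt_uncurry hf
  set φ : ℝ → E := fun x => if x < b then ψ x else γ x
  have hφψ : ∀ x < b, φ x = ψ x := fun x hx => if_pos hx
  have hφγ : ∀ x, b ≤ x → φ x = γ x := fun x hx => if_neg hx.not_gt
  have hleft : ∀ x ∈ Ico a b, HasDerivAt φ (f x (φ x)) x := fun x hx => by
    have hev : φ =ᶠ[𝓝 x] ψ := eventually_of_mem (Iio_mem_nhds hx.2) hφψ
    simpa [hφψ x hx.2] using (hψ x hx).congr_of_eventuallyEq hev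
  have hright : ∀ x ∈ Ioo b (b + ε), HasDerivAt φ (f x (φ x)) x := fun x hx => by
    have hev : φ =ᶠ[𝓝 x] γ :=
      eventually_of_mem (Ioi_mem_nhds hx.1) fun y hy => hφγ y (le_of_lt hy)
    simpa [hφγ x hx.1.le] using (hγ x ⟨by linarith [hx.1], hx.2⟩).congr_of_eventuallyEq hev
  have hφb : φ b = L := by rw [hφγ b le_rfl, hγb]
  have hderiv_b : HasDerivAt φ (f b L) b := by
    have hlim : Tendsto (fun x => f x (ψ x)) (𝓝[<] b) (𝓝 (f b L)) :=
      hf.continuousAt.tendsto.comp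
        (tendsto_nhdsWithin_of_tendsto_nhds tendsto_id |>.prodMk_nhds hL)
    have hIic : HasDerivWithinAt φ (f b L) (Iic b) b := by
      refine hasDerivWithinAt_Iic_of_tendsto_deriv (s := Ioo a b)
        (fun x hx => (hleft x (Ioo_subset_Ico_self hx)).differentiableAt.differentiableWithinAt)
        ?_ (Ioo_mem_nhdsLT hab) ?_
      · rw [ContinuousWithinAt, hφb]
        refine (hL.mono_left (nhdsWithin_mono _ fun x hx => hx.2)).congr' ?_
        exact eventually_nhdsWithin_of_forall fun x hx => (hφψ x hx.2).symm
      · refine hlim.congr' ?_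
        filter_upwards [Ioo_mem_nhdsLT hab] with x hx
        rw [(hleft x (Ioo_subset_Ico_self hx)).deriv, hφψ x hx.2]
    have hIci : HasDerivWithinAt φ (f b L) (Ici b) b := by
      rw [← hγb]
      exact (hγ b ⟨by linarith, by linarith⟩).hasDerivWithinAt.congr (fun y hy => hφγ y hy)
        (hφγ b le_rfl)
    simpa using hIic.union hIci
  refine ⟨φ, b + ε, by linarith, fun x hx => ?_, fun x hx => hφψ x hx.2⟩
  rcases lt_trichotomy x b with hxb | rfl | hxb
  · exact hleft x ⟨hx.1, hxb⟩
  · rwa [hφb]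
  · exact hright x ⟨hxb, hx.2⟩

end LocalExistence

theorem AntitoneOn.tendsto_nhdsLT_atBot_or_exists_tendsto {f : ℝ → ℝ} {a b : ℝ} (hab : a < b)
    (hf : AntitoneOn f (Ioo a b)) :
    Tendsto f (𝓝[<] b) atBot ∨ ∃ L, Tendsto f (𝓝[<] b) (𝓝 L) := by
  by_cases hbdd : BddBelow (f '' Ioo a b)
  · exact .inr ⟨_, hf.tendsto_nhdsWithin_Ioo_left (nonempty_Ioo.2 hab) hbdd⟩
  refine .inl (tendsto_atBot.2 fun M => ?_)
  obtain ⟨_, ⟨z, hz, rfl⟩, hzM⟩ := not_bddBelow_iff.1 hbdd M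
  filter_upwards [Ioo_mem_nhdsLT hz.2] with x hx
  exact (hf ⟨hz.1, hz.2⟩ ⟨hz.1.trans hx.1, hx.2⟩ hx.1.le).trans hzM.le

theorem le_of_hasDerivAt_of_rhs_neg {f : ℝ → ℝ → ℝ} {ψ : ℝ → ℝ} {a b c : ℝ}
    (hψ : ∀ x ∈ Ico a b, HasDerivAt ψ (f x (ψ x)) x) (ha : ψ a ≤ c)
    (hc : ∀ x ∈ Ico a b, f x c < 0) : ∀ x ∈ Ico a b, ψ x ≤ c := by
  intro x hx
  have hsub : Icc a x ⊆ Ico a b := Icc_subset_Ico_right hx.2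
  refine image_le_of_deriv_right_lt_deriv_boundary' (B := fun _ => c) (B' := 0)
    (fun y hy => (hψ y (hsub hy)).continuousAt.continuousWithinAt)
    (fun y hy => (hψ y (hsub (Ico_subset_Icc_self hy))).hasDerivWithinAt) ha continuousOn_const
    (fun y _ => hasDerivWithinAt_const _ _ _) (fun y hy hyc => ?_) ⟨hx.1, le_rfl⟩
  simpa [hyc] using hc y (hsub (Ico_subset_Icc_self hy))

noncomputable def reducedField (n : ℕ) (x y : ℝ) : ℝ :=
  (2 * √(n + 1) / (1 + x ^ 2)) * (1 + y ^ 2) *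
    (1 - ((2 * n - 1 - x ^ 2) / (2 * √(n + 1) * x)) * y)

/-- The paper's `η`: `reducedField n x y` changes sign at `y = nullcline n x`. -/
noncomputable def nullcline (n : ℕ) (x : ℝ) : ℝ := 2 * √(n + 1) * x / (2 * n - 1 - x ^ 2)

theorem contDiffAt_uncurry_reducedField (n : ℕ) {x : ℝ} (hx : x ≠ 0) (y : ℝ) :
    ContDiffAt ℝ 1 (uncurry (reducedField n)) (x, y) := by
  unfold reducedField uncurry
  fun_prop (disch := positivity)

theorem reducedField_neg_of_lt_nullcline {n : ℕ} {x y : ℝ} (hx : √(2 * n - 1) < x)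
    (hy : y < nullcline n x) : reducedField n x y < 0 := by
  have hx₀ : 0 < x := (sqrt_nonneg _).trans_lt hx
  have hd : 2 * (n : ℝ) - 1 - x ^ 2 < 0 := by linarith [(sqrt_lt' hx₀).1 hx]
  have hK : 0 < 2 * √(n + 1) * x := by positivity
  have hfactor : 1 < (2 * n - 1 - x ^ 2) / (2 * √(n + 1) * x) * y := by
    rw [div_mul_eq_mul_div, one_lt_div hK]
    linarith [(lt_div_iff_of_neg hd).1 hy]
  exact mul_neg_of_pos_of_neg (by positivity) (by linarith)

theorem nullcline_monotoneOn {n : ℕ} (hn : 1 ≤ n) :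
    MonotoneOn (nullcline n) (Ioi √(2 * n - 1)) := by
  intro x₀ hx₀ x hx hle
  have hn' : (1 : ℝ) ≤ n := by exact_mod_cast hn
  have hx₀pos : 0 < x₀ := (sqrt_nonneg _).trans_lt hx₀
  have hd₀ : 2 * (n : ℝ) - 1 - x₀ ^ 2 < 0 := by linarith [(sqrt_lt' hx₀pos).1 hx₀]
  have hd : 2 * (n : ℝ) - 1 - x ^ 2 < 0 := by nlinarith
  unfold nullcline
  rw [← neg_div_neg_eq, ← neg_div_neg_eq (_ * x), div_le_div_iff₀ (by linarith) (by linarith)]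
  have hfactor : 0 ≤ √(n + 1) * (x - x₀) * (2 * n - 1 + x * x₀) := by
    have : 0 ≤ x * x₀ := by nlinarith
    exact mul_nonneg (mul_nonneg (sqrt_nonneg _) (sub_nonneg.2 hle)) (by linarith)
  linarith

theorem strictAntiOn_of_lt_nullcline {n : ℕ} (hn : 1 ≤ n) {ψ : ℝ → ℝ} {x₀ b : ℝ}
    (hx₀ : √(2 * n - 1) < x₀) (hψ : ∀ x ∈ Ico x₀ b, HasDerivAt ψ (reducedField n x (ψ x)) x)
    (hval : ψ x₀ < nullcline n x₀) : StrictAntiOn ψ (Ico x₀ b) := by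
  have hbelow : ∀ x ∈ Ico x₀ b, ψ x₀ < nullcline n x := fun x hx =>
    hval.trans_le (nullcline_monotoneOn hn hx₀ (hx₀.trans_le hx.1) hx.1)
  have hle : ∀ x ∈ Ico x₀ b, ψ x ≤ ψ x₀ := le_of_hasDerivAt_of_rhs_neg hψ le_rfl fun x hx =>
    reducedField_neg_of_lt_nullcline (hx₀.trans_le hx.1) (hbelow x hx)
  refine strictAntiOn_of_hasDerivWithinAt_neg (convex_Ico x₀ b)
    (fun x hx => (hψ x hx).continuousAt.continuousWithinAt) (f' := fun x => reducedField n x (ψ x))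
    (fun x hx => ?_) fun x hx => ?_ <;> rw [interior_Ico] at hx
  · exact (hψ x (Ioo_subset_Ico_self hx)).hasDerivWithinAt
  · have hx' := Ioo_subset_Ico_self hx
    exact reducedField_neg_of_lt_nullcline (hx₀.trans_le hx'.1)
      ((hle x hx').trans_lt (hbelow x hx'))

/-- Fact (*₄): a maximal solution of the reduced translator ODE lying below the nullcline at some
`x₀ ∈ (√(2n−1), ∞)` blows up to `+∞` at some finite `x₁ ∈ (x₀, ∞)` as `x ↑ x₁`. Here `b`
is the right endpoint of the maximal interval of existence `[x₀, b)` of the solution `ψ`;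
maximality is expressed by non-extendibility beyond `b` (including `b' = ⊤` being
impossible, encoded by quantifying over all `b' > b`). -/
theorem stmt_10 (n : ℕ) (hn : 1 ≤ n) (ψ : ℝ → ℝ) (x₀ b : ℝ)
    (hx₀ : Real.sqrt (2 * n - 1) < x₀) (hb : x₀ < b)
    (hsol : ∀ x ∈ Set.Ico x₀ b, HasDerivAt ψ
      ((2 * Real.sqrt (n + 1) / (1 + x ^ 2)) * (1 + ψ x ^ 2) *
        (1 - ((2 * n - 1 - x ^ 2) / (2 * Real.sqrt (n + 1) * x)) * ψ x)) x)
    (hmax : ∀ (φ : ℝ → ℝ), ∀ b' : ℝ, b < b' →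
      (∀ x ∈ Set.Ico x₀ b', HasDerivAt φ
        ((2 * Real.sqrt (n + 1) / (1 + x ^ 2)) * (1 + φ x ^ 2) *
          (1 - ((2 * n - 1 - x ^ 2) / (2 * Real.sqrt (n + 1) * x)) * φ x)) x) →
      ¬ Set.EqOn φ ψ (Set.Ico x₀ b))
    (hval : ψ x₀ < 2 * Real.sqrt (n + 1) * x₀ / (2 * n - 1 - x₀ ^ 2)) :
    ∃ x₁ ∈ Set.Ioi x₀, x₁ = b ∧ Tendsto ψ (nhdsWithin x₁ (Set.Iio x₁)) atBot := by
  have hanti : StrictAntiOn ψ (Ico x₀ b) := strictAntiOn_of_lt_nullcline hn hx₀ hsol hval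
  refine ⟨b, hb, rfl, ?_⟩
  obtain hbot | ⟨L, hL⟩ :=
    (hanti.antitoneOn.mono Ioo_subset_Ico_self).tendsto_nhdsLT_atBot_or_exists_tendsto hb
  · exact hbot
  have hb₀ : b ≠ 0 := ((sqrt_nonneg _).trans_lt (hx₀.trans hb)).ne'
  obtain ⟨φ, b', hbb', hφ, hφψ⟩ :=
    exists_hasDerivAt_extension hb hsol hL (contDiffAt_uncurry_reducedField n hb₀ L)
  exact absurd hφψ (hmax φ b' hbb' hφ)
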